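/- A graph G satisfies diadem(G) = corona(G) ∩ L(G) if and only if corona(G) ∩ ∂_L(G) = ∅. -/
import Mathlib


open Finset

variable {V : Type*} [Fintype V] [DecidableEq V] (G : SimpleGraph V) [DecidableRel G.Adj]

/-- `N(S)`: the set of vertices adjacent to some vertex of `S`. -/
def nbhd (S : Finset V) : Finset V := S.biUnion (fun v => G.neighborFinset v)

/-- `S` is an independent set of `G`. -/
def Indep (S : Finset V) : Prop := ∀ u ∈ S, ∀ v ∈ S, ¬ G.Adj u v

/-- The difference `d_G(S) = |S| - |N(S)|`. -/
def diffI (S : Finset V) : ℤ := (S.card : ℤ) - ((nbhd G S).card : ℤ)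

/-- `S` is a maximum independent set of `G`. -/
def IsMaxIndep (S : Finset V) : Prop :=
  Indep G S ∧ ∀ T : Finset V, Indep G T → T.card ≤ S.card

/-- `I` is a critical independent set of `G`. -/
def IsCritIndep (I : Finset V) : Prop :=
  Indep G I ∧ ∀ J : Finset V, Indep G J → diffI G J ≤ diffI G I

/-- `I` is a maximum critical independent set of `G`. -/
def IsMaxCritIndep (I : Finset V) : Prop :=
  IsCritIndep G I ∧ ∀ J : Finset V, IsCritIndep G J → J.card ≤ I.card

/-- `core(G)`: intersection of all maximum independent sets. -/
def core : Set V := {v | ∀ S : Finset V, IsMaxIndep G S → v ∈ S}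

/-- `corona(G)`: union of all maximum independent sets. -/
def corona : Set V := {v | ∃ S : Finset V, IsMaxIndep G S ∧ v ∈ S}

/-- `nucleus(G)`: intersection of all maximum critical independent sets. -/
def nucleus : Set V := {v | ∀ S : Finset V, IsMaxCritIndep G S → v ∈ S}

/-- `diadem(G)`: union of all maximum critical independent sets. -/
def diadem : Set V := {v | ∃ S : Finset V, IsMaxCritIndep G S ∧ v ∈ S}

/-- `ker(G)`: intersection of all critical independent sets. -/
def kerS : Set V := {v | ∀ S : Finset V, IsCritIndep G S → v ∈ S}

/-- A matching of `G`, given as an involution of the vertex set: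
unmatched vertices are fixed points, matched vertices are sent to their partner. -/
def IsMatching (M : V → V) : Prop :=
  Function.Involutive M ∧ ∀ v, M v ≠ v → G.Adj v (M v)

/-- Twice the number of edges of the matching `M`, i.e. the number of matched vertices. -/
def matchSize (M : V → V) : ℕ := (univ.filter fun v => M v ≠ v).card

/-- `M` is a maximum matching of `G`. -/
def IsMaxMatching (M : V → V) : Prop :=
  IsMatching G M ∧ ∀ M' : V → V, IsMatching G M' → matchSize M' ≤ matchSize M

/-- `M` is a matching of the induced subgraph `G[L]`. -/
def IsMatchingOn (L : Finset V) (M : V → V) : Prop :=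
  IsMatching G M ∧ ∀ v, M v ≠ v → v ∈ L

/-- `M` is a maximum matching of the induced subgraph `G[L]`. -/
def IsMaxMatchingOn (L : Finset V) (M : V → V) : Prop :=
  IsMatchingOn G L M ∧ ∀ M' : V → V, IsMatchingOn G L M' → matchSize M' ≤ matchSize M

/-- `S` is a maximum independent set of the induced subgraph `G[L]`. -/
def IsMaxIndepOn (L : Finset V) (S : Finset V) : Prop :=
  S ⊆ L ∧ Indep G S ∧ ∀ T : Finset V, T ⊆ L → Indep G T → T.card ≤ S.card

/-- `core` of the induced subgraph `G[L]`. -/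
def coreOn (L : Finset V) : Set V := {v | ∀ S : Finset V, IsMaxIndepOn G L S → v ∈ S}

/-- `D(G[L])`: vertices of `L` missed by some maximum matching of `G[L]`. -/
def Dset (L : Finset V) : Set V := {v | v ∈ L ∧ ∃ M : V → V, IsMaxMatchingOn G L M ∧ M v = v}

/-- The Larson boundary `∂_L(G)` of the set `L`. -/
def boundaryL (L : Finset V) : Set V := {v | v ∈ L ∧ ∃ w, w ∉ L ∧ G.Adj v w}

/-- The critical difference `d(G)`. -/
noncomputable def critDiff : ℤ := sSup {d : ℤ | ∃ X : Finset V, diffI G X = d}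

/-- The difference of `S` computed in the induced subgraph `G[L]`. -/
def diffOn (L : Finset V) (S : Finset V) : ℤ := (S.card : ℤ) - ((nbhd G S ∩ L).card : ℤ)

/-- The critical difference of the induced subgraph `G[L]`. -/
noncomputable def critDiffOn (L : Finset V) : ℤ := sSup {d : ℤ | ∃ X : Finset V, X ⊆ L ∧ diffOn G L X = d}

/-- `G` is a König–Egerváry graph: `α(G) + μ(G) = |V(G)|`. -/
def KonigEgervary : Prop :=
  ∃ (S : Finset V) (M : V → V), IsMaxIndep G S ∧ IsMaxMatching G M ∧
    2 * S.card + matchSize M = 2 * Fintype.card V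
section Aux

lemma mem_nbhd_iff {S : Finset V} {v : V} : v ∈ nbhd G S ↔ ∃ u ∈ S, G.Adj u v := by
  simp [nbhd, SimpleGraph.mem_neighborFinset]

lemma nbhd_mono {A B : Finset V} (h : A ⊆ B) : nbhd G A ⊆ nbhd G B := by
  intro w hw
  obtain ⟨u, hu, hadj⟩ := (mem_nbhd_iff G).1 hw
  exact (mem_nbhd_iff G).2 ⟨u, h hu, hadj⟩

lemma nbhd_union (A B : Finset V) : nbhd G (A ∪ B) = nbhd G A ∪ nbhd G B := by
  ext w
  simp only [mem_nbhd_iff, Finset.mem_union]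
  constructor
  · rintro ⟨u, hu | hu, hadj⟩
    · exact Or.inl ⟨u, hu, hadj⟩
    · exact Or.inr ⟨u, hu, hadj⟩
  · rintro (⟨u, hu, hadj⟩ | ⟨u, hu, hadj⟩)
    · exact ⟨u, Or.inl hu, hadj⟩
    · exact ⟨u, Or.inr hu, hadj⟩

lemma indep_subset {A B : Finset V} (hB : Indep G B) (h : A ⊆ B) : Indep G A :=
  fun u hu v hv => hB u (h hu) v (h hv)

lemma not_mem_nbhd_self {A : Finset V} (hA : Indep G A) {v : V} (hv : v ∈ A) :
    v ∉ nbhd G A := by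
  intro h
  obtain ⟨u, hu, hadj⟩ := (mem_nbhd_iff G).1 h
  exact hA u hu v hv hadj

lemma indep_union {A B : Finset V} (hA : Indep G A) (hB : Indep G B)
    (h : ∀ a ∈ A, ∀ b ∈ B, ¬ G.Adj a b) : Indep G (A ∪ B) := by
  intro u hu v hv hadj
  rcases Finset.mem_union.1 hu with hu' | hu' <;> rcases Finset.mem_union.1 hv with hv' | hv'
  · exact hA u hu' v hv' hadj
  · exact h u hu' v hv' hadj
  · exact h v hv' u hu' hadj.symm
  · exact hB u hu' v hv' hadj

lemma shed_indep (X : Finset V) : Indep G (X \ nbhd G X) := by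
  intro u hu v hv hadj
  exact (Finset.mem_sdiff.1 hv).2 ((mem_nbhd_iff G).2 ⟨u, (Finset.mem_sdiff.1 hu).1, hadj⟩)

lemma shed_diff (X : Finset V) : diffI G X ≤ diffI G (X \ nbhd G X) := by
  have hNY : nbhd G (X \ nbhd G X) ⊆ nbhd G X \ X := by
    intro w hw
    obtain ⟨y, hy, hadj⟩ := (mem_nbhd_iff G).1 hw
    refine Finset.mem_sdiff.2 ⟨(mem_nbhd_iff G).2 ⟨y, (Finset.mem_sdiff.1 hy).1, hadj⟩,
      fun hwX => ?_⟩
    exact (Finset.mem_sdiff.1 hy).2 ((mem_nbhd_iff G).2 ⟨w, hwX, hadj.symm⟩)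
  have h1 : (X \ nbhd G X).card + (X ∩ nbhd G X).card = X.card :=
    Finset.card_sdiff_add_card_inter _ _
  have h2 : (nbhd G X \ X).card + (nbhd G X ∩ X).card = (nbhd G X).card :=
    Finset.card_sdiff_add_card_inter _ _
  have h3 : (X ∩ nbhd G X).card = (nbhd G X ∩ X).card := by rw [Finset.inter_comm]
  have h4 : (nbhd G (X \ nbhd G X)).card ≤ (nbhd G X \ X).card := Finset.card_le_card hNY
  unfold diffI
  omega

lemma diffI_le_crit {I : Finset V} (hI : IsCritIndep G I) (X : Finset V) :
    diffI G X ≤ diffI G I :=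
  (shed_diff G X).trans (hI.2 _ (shed_indep G X))

lemma submod (A B : Finset V) :
    diffI G A + diffI G B ≤ diffI G (A ∪ B) + diffI G (A ∩ B) := by
  have c1 : (A ∪ B).card + (A ∩ B).card = A.card + B.card :=
    Finset.card_union_add_card_inter _ _
  have c2 : (nbhd G A ∪ nbhd G B).card + (nbhd G A ∩ nbhd G B).card
      = (nbhd G A).card + (nbhd G B).card := Finset.card_union_add_card_inter _ _
  have c3 : (nbhd G (A ∩ B)).card ≤ (nbhd G A ∩ nbhd G B).card :=
    Finset.card_le_card (Finset.subset_inter (nbhd_mono G Finset.inter_subset_left)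
      (nbhd_mono G Finset.inter_subset_right))
  have c4 : nbhd G (A ∪ B) = nbhd G A ∪ nbhd G B := nbhd_union G A B
  unfold diffI
  rw [c4]
  omega

lemma hall_bound {A : Finset V} (hA : IsCritIndep G A) {Y : Finset V} (hY : Y ⊆ nbhd G A) :
    Y.card ≤ (nbhd G Y ∩ A).card := by
  have hd := hA.2 _ (indep_subset G hA.1 (Finset.sdiff_subset : A \ nbhd G Y ⊆ A))
  have hNJ : nbhd G (A \ nbhd G Y) ⊆ nbhd G A \ Y := by
    intro w hw
    obtain ⟨j, hj, hadj⟩ := (mem_nbhd_iff G).1 hw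
    refine Finset.mem_sdiff.2 ⟨(mem_nbhd_iff G).2 ⟨j, (Finset.mem_sdiff.1 hj).1, hadj⟩,
      fun hwY => ?_⟩
    exact (Finset.mem_sdiff.1 hj).2 ((mem_nbhd_iff G).2 ⟨w, hwY, hadj.symm⟩)
  have h1 : (A \ nbhd G Y).card + (A ∩ nbhd G Y).card = A.card :=
    Finset.card_sdiff_add_card_inter _ _
  have h2 : (nbhd G A \ Y).card + Y.card = (nbhd G A).card :=
    Finset.card_sdiff_add_card_eq_card hY
  have h3 : (nbhd G (A \ nbhd G Y)).card ≤ (nbhd G A \ Y).card := Finset.card_le_card hNJ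
  have h4 : (A ∩ nbhd G Y).card = (nbhd G Y ∩ A).card := by rw [Finset.inter_comm]
  unfold diffI at hd
  omega

lemma exists_matching {A : Finset V} (hA : IsCritIndep G A) :
    ∃ f : V → V, Set.InjOn f ↑(nbhd G A) ∧ ∀ w ∈ nbhd G A, f w ∈ A ∧ G.Adj w (f w) := by
  classical
  have hall : ∀ s : Finset {x // x ∈ nbhd G A},
      s.card ≤ (s.biUnion fun x => G.neighborFinset x.val ∩ A).card := by
    intro s
    have hYsub : s.image Subtype.val ⊆ nbhd G A := by
      intro y hy
      obtain ⟨x, _, rfl⟩ := Finset.mem_image.1 hy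
      exact x.2
    have hcard : (s.image Subtype.val).card = s.card :=
      Finset.card_image_of_injective _ Subtype.val_injective
    have hbi : s.biUnion (fun x => G.neighborFinset x.val ∩ A)
        = nbhd G (s.image Subtype.val) ∩ A := by
      ext z
      simp only [Finset.mem_biUnion, Finset.mem_inter, SimpleGraph.mem_neighborFinset,
        mem_nbhd_iff, Finset.mem_image]
      constructor
      · rintro ⟨x, hx, hadj, hzA⟩
        exact ⟨⟨x.val, ⟨x, hx, rfl⟩, hadj⟩, hzA⟩
      · rintro ⟨⟨u, ⟨x, hx, rfl⟩, hadj⟩, hzA⟩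
        exact ⟨x, hx, hadj, hzA⟩
    rw [hbi, ← hcard]
    exact hall_bound G hA hYsub
  obtain ⟨f₀, hinj, hmem⟩ := (Finset.all_card_le_biUnion_card_iff_exists_injective _).1 hall
  refine ⟨fun w => if h : w ∈ nbhd G A then f₀ ⟨w, h⟩ else w, ?_, ?_⟩
  · intro w1 h1 w2 h2 heq
    simp only [Finset.mem_coe] at h1 h2
    dsimp only at heq
    rw [dif_pos h1, dif_pos h2] at heq
    exact congrArg Subtype.val (hinj heq)
  · intro w hw
    dsimp only
    rw [dif_pos hw]
    have h' := Finset.mem_inter.1 (hmem ⟨w, hw⟩)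
    exact ⟨h'.2, by simpa using h'.1⟩

lemma indep_card_le_of_subset_closed {A : Finset V} (hA : IsCritIndep G A) {T : Finset V}
    (hT : Indep G T) (hsub : T ⊆ A ∪ nbhd G A) : T.card ≤ A.card := by
  classical
  obtain ⟨f, hinj, hf⟩ := exists_matching G hA
  apply Finset.card_le_card_of_injOn (fun t => if t ∈ A then t else f t)
  · intro t ht
    by_cases h : t ∈ A
    · simpa [h]
    · have htn : t ∈ nbhd G A := (Finset.mem_union.1 (hsub ht)).resolve_left h
      simpa [h] using (hf t htn).1
  · intro t1 h1 t2 h2 heq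
    simp only [Finset.mem_coe] at h1 h2
    dsimp only at heq
    by_cases c1 : t1 ∈ A
    · by_cases c2 : t2 ∈ A
      · rwa [if_pos c1, if_pos c2] at heq
      · rw [if_pos c1, if_neg c2] at heq
        have htn : t2 ∈ nbhd G A := (Finset.mem_union.1 (hsub h2)).resolve_left c2
        have hadj := (hf t2 htn).2
        rw [← heq] at hadj
        exact absurd hadj (hT t2 h2 t1 h1)
    · by_cases c2 : t2 ∈ A
      · rw [if_neg c1, if_pos c2] at heq
        have htn : t1 ∈ nbhd G A := (Finset.mem_union.1 (hsub h1)).resolve_left c1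
        have hadj := (hf t1 htn).2
        rw [heq] at hadj
        exact absurd hadj (hT t1 h1 t2 h2)
      · rw [if_neg c1, if_neg c2] at heq
        have htn1 : t1 ∈ nbhd G A := (Finset.mem_union.1 (hsub h1)).resolve_left c1
        have htn2 : t2 ∈ nbhd G A := (Finset.mem_union.1 (hsub h2)).resolve_left c2
        exact hinj (Finset.mem_coe.2 htn1) (Finset.mem_coe.2 htn2) heq

lemma exists_max_indep : ∃ S : Finset V, IsMaxIndep G S := by
  classical
  obtain ⟨S, hSmem, hSmax⟩ := Finset.exists_max_image
    ((Finset.univ : Finset (Finset V)).filter fun T => Indep G T) Finset.card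
    ⟨∅, Finset.mem_filter.2 ⟨Finset.mem_univ _, fun u hu => absurd hu (Finset.notMem_empty u)⟩⟩
  exact ⟨S, (Finset.mem_filter.1 hSmem).2,
    fun T hT => hSmax T (Finset.mem_filter.2 ⟨Finset.mem_univ _, hT⟩)⟩

lemma crit_mem_corona {A : Finset V} (hA : IsCritIndep G A) {v : V} (hv : v ∈ A) :
    v ∈ corona G := by
  classical
  obtain ⟨S, hS⟩ := exists_max_indep G
  have hS'indep : Indep G (A ∪ (S \ (A ∪ nbhd G A))) :=
    indep_union G hA.1 (indep_subset G hS.1 Finset.sdiff_subset)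
      (fun a ha b hb hadj => (Finset.mem_sdiff.1 hb).2
        (Finset.mem_union_right _ ((mem_nbhd_iff G).2 ⟨a, ha, hadj⟩)))
  have hdisj : Disjoint A (S \ (A ∪ nbhd G A)) :=
    Finset.disjoint_left.2 fun a ha hb => (Finset.mem_sdiff.1 hb).2 (Finset.mem_union_left _ ha)
  have hcard1 : (A ∪ (S \ (A ∪ nbhd G A))).card = A.card + (S \ (A ∪ nbhd G A)).card :=
    Finset.card_union_of_disjoint hdisj
  have hcard2 : (S ∩ (A ∪ nbhd G A)).card + (S \ (A ∪ nbhd G A)).card = S.card :=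
    Finset.card_inter_add_card_sdiff _ _
  have hinter : (S ∩ (A ∪ nbhd G A)).card ≤ A.card :=
    indep_card_le_of_subset_closed G hA (indep_subset G hS.1 Finset.inter_subset_left)
      Finset.inter_subset_right
  have hge : S.card ≤ (A ∪ (S \ (A ∪ nbhd G A))).card := by omega
  exact ⟨A ∪ (S \ (A ∪ nbhd G A)), ⟨hS'indep, fun T hT => (hS.2 T hT).trans hge⟩,
    Finset.mem_union_left _ hv⟩

lemma maxcrit_card_eq {S I : Finset V} (hS : IsMaxCritIndep G S) (hI : IsMaxCritIndep G I) :
    S.card = I.card := le_antisymm (hI.2 S hS.1) (hS.2 I hI.1)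

lemma maxcrit_diff_eq {S I : Finset V} (hS : IsMaxCritIndep G S) (hI : IsMaxCritIndep G I) :
    diffI G S = diffI G I := le_antisymm (hI.1.2 S hS.1.1) (hS.1.2 I hI.1.1)

lemma diff_union_eq {S I : Finset V} (hS : IsMaxCritIndep G S) (hI : IsMaxCritIndep G I) :
    diffI G (S ∪ I) = diffI G I := by
  have h1 : diffI G (S ∪ I) ≤ diffI G I := diffI_le_crit G hI.1 _
  have h2 : diffI G (S ∩ I) ≤ diffI G I := hI.1.2 _ (indep_subset G hS.1.1 Finset.inter_subset_left)
  have h3 := submod G S I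
  have h4 := maxcrit_diff_eq G hS hI
  omega

lemma maxcrit_subset_closed {S I : Finset V} (hS : IsMaxCritIndep G S)
    (hI : IsMaxCritIndep G I) : I ⊆ S ∪ nbhd G S := by
  classical
  set Y := (S ∪ I) \ nbhd G (S ∪ I) with hYdef
  have hYindep : Indep G Y := shed_indep G _
  have hYdiff : diffI G I ≤ diffI G Y := by
    have h := shed_diff G (S ∪ I)
    rw [diff_union_eq G hS hI] at h
    exact h
  have hZindep : Indep G (S ∪ Y) := indep_union G hS.1.1 hYindep (fun s hs y hy hadj =>
    (Finset.mem_sdiff.1 hy).2 ((mem_nbhd_iff G).2 ⟨s, Finset.mem_union_left _ hs, hadj⟩))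
  have hZdiff : diffI G I ≤ diffI G (S ∪ Y) := by
    have h3 := submod G S Y
    have h2 : diffI G (S ∩ Y) ≤ diffI G I :=
      hI.1.2 _ (indep_subset G hS.1.1 Finset.inter_subset_left)
    have h4 : diffI G S = diffI G I := maxcrit_diff_eq G hS hI
    omega
  have hZcrit : IsCritIndep G (S ∪ Y) := ⟨hZindep, fun J hJ => (hI.1.2 J hJ).trans hZdiff⟩
  have hZcard : (S ∪ Y).card ≤ S.card := by
    have h1 := hI.2 _ hZcrit
    have h2 := maxcrit_card_eq G hS hI
    omega
  have hE : S = S ∪ Y := Finset.eq_of_subset_of_card_le Finset.subset_union_left hZcard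
  have hYS : Y ⊆ S := fun y hy => by rw [hE]; exact Finset.mem_union_right _ hy
  intro i hi
  by_cases hin : i ∈ nbhd G S
  · exact Finset.mem_union_right _ hin
  · refine Finset.mem_union_left _ (hYS ?_)
    refine Finset.mem_sdiff.2 ⟨Finset.mem_union_right _ hi, ?_⟩
    rw [nbhd_union]
    intro hmem
    rcases Finset.mem_union.1 hmem with h | h
    · exact hin h
    · exact not_mem_nbhd_self G hI.1.1 hi h

lemma maxcrit_nbhd_subset_closed {S I : Finset V} (hS : IsMaxCritIndep G S)
    (hI : IsMaxCritIndep G I) : nbhd G S ⊆ I ∪ nbhd G I := by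
  classical
  have hIsub : I ⊆ S ∪ nbhd G S := maxcrit_subset_closed G hS hI
  have hIpart : I = (I ∩ S) ∪ (I ∩ nbhd G S) := by
    ext z
    simp only [Finset.mem_union, Finset.mem_inter]
    constructor
    · intro hz
      rcases Finset.mem_union.1 (hIsub hz) with h | h
      · exact Or.inl ⟨hz, h⟩
      · exact Or.inr ⟨hz, h⟩
    · rintro (⟨h, _⟩ | ⟨h, _⟩) <;> exact h
  have hdisj1 : Disjoint (I ∩ S) (I ∩ nbhd G S) := Finset.disjoint_left.2 fun a ha hb =>
    not_mem_nbhd_self G hS.1.1 (Finset.mem_inter.1 ha).2 (Finset.mem_inter.1 hb).2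
  have e2 : I.card = (I ∩ S).card + (I ∩ nbhd G S).card := by
    conv_lhs => rw [hIpart]
    exact Finset.card_union_of_disjoint hdisj1
  have hdisj2 : Disjoint (nbhd G S ∩ I) (nbhd G S ∩ nbhd G I) := Finset.disjoint_left.2
    fun a ha hb => not_mem_nbhd_self G hI.1.1 (Finset.mem_inter.1 ha).2 (Finset.mem_inter.1 hb).2
  have e1 : ((nbhd G S ∩ I) ∪ (nbhd G S ∩ nbhd G I)).card
      = (nbhd G S ∩ I).card + (nbhd G S ∩ nbhd G I).card :=
    Finset.card_union_of_disjoint hdisj2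
  have e3 : (nbhd G S ∩ I).card = (I ∩ nbhd G S).card := by rw [Finset.inter_comm]
  have e4 : (nbhd G S ∪ nbhd G I).card + (nbhd G S ∩ nbhd G I).card
      = (nbhd G S).card + (nbhd G I).card := Finset.card_union_add_card_inter _ _
  have e5 : diffI G (S ∪ I) = diffI G I := diff_union_eq G hS hI
  have e6 : (S ∪ I).card + (S ∩ I).card = S.card + I.card :=
    Finset.card_union_add_card_inter _ _
  have e7 : (I ∩ S).card = (S ∩ I).card := by rw [Finset.inter_comm]
  have e8 : S.card = I.card := maxcrit_card_eq G hS hI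
  have e9 : diffI G S = diffI G I := maxcrit_diff_eq G hS hI
  have hBsub : (nbhd G S ∩ I) ∪ (nbhd G S ∩ nbhd G I) ⊆ nbhd G S :=
    Finset.union_subset Finset.inter_subset_left Finset.inter_subset_left
  have hcardB : (nbhd G S).card ≤ ((nbhd G S ∩ I) ∪ (nbhd G S ∩ nbhd G I)).card := by
    unfold diffI at e5 e9
    rw [nbhd_union] at e5
    omega
  have hBeq : (nbhd G S ∩ I) ∪ (nbhd G S ∩ nbhd G I) = nbhd G S :=
    Finset.eq_of_subset_of_card_le hBsub hcardB
  intro w hw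
  rw [← hBeq] at hw
  rcases Finset.mem_union.1 hw with h | h
  · exact Finset.mem_union_left _ (Finset.mem_inter.1 h).2
  · exact Finset.mem_union_right _ (Finset.mem_inter.1 h).2

end Aux

theorem stmt15 (I : Finset V) (hI : IsMaxCritIndep G I) :
    diadem G = corona G ∩ ↑(I ∪ nbhd G I) ↔
      corona G ∩ boundaryL G (I ∪ nbhd G I) = ∅ := by
  classical
  constructor
  · intro h
    rw [Set.eq_empty_iff_forall_notMem]
    rintro v ⟨hvcor, hvL, w, hwL, hadj⟩
    have hvd : v ∈ diadem G := by
      rw [h]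
      exact ⟨hvcor, hvL⟩
    obtain ⟨S, hSmc, hvS⟩ := hvd
    exact hwL (maxcrit_nbhd_subset_closed G hSmc hI ((mem_nbhd_iff G).2 ⟨v, hvS, hadj⟩))
  · intro h
    ext v
    constructor
    · rintro ⟨S, hSmc, hvS⟩
      exact ⟨crit_mem_corona G hSmc.1 hvS,
        Finset.mem_coe.2 (maxcrit_subset_closed G hI hSmc hvS)⟩
    · rintro ⟨hvcor, hvL⟩
      obtain ⟨T, hT, hvT⟩ := hvcor
      have hvL' : v ∈ I ∪ nbhd G I := Finset.mem_coe.1 hvL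
      set L := I ∪ nbhd G I with hLdef
      set A := T ∩ L with hAdef
      have hAindep : Indep G A := indep_subset G hT.1 Finset.inter_subset_left
      have hNA : nbhd G A ⊆ L := by
        intro w hw
        obtain ⟨a, ha, hadj⟩ := (mem_nbhd_iff G).1 hw
        by_contra hwL
        have hmem : a ∈ corona G ∩ boundaryL G L :=
          ⟨⟨T, hT, (Finset.mem_inter.1 ha).1⟩, (Finset.mem_inter.1 ha).2, w, hwL, hadj⟩
        rw [h] at hmem
        exact Set.notMem_empty a hmem
      have hVd : Indep G (I ∪ (T \ L)) := indep_union G hI.1.1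
        (indep_subset G hT.1 Finset.sdiff_subset)
        (fun i hi t ht hadj => (Finset.mem_sdiff.1 ht).2
          (Finset.mem_union_right _ ((mem_nbhd_iff G).2 ⟨i, hi, hadj⟩)))
      have hdisjIT : Disjoint I (T \ L) := Finset.disjoint_left.2
        fun a ha hb => (Finset.mem_sdiff.1 hb).2 (Finset.mem_union_left _ ha)
      have hc1 : (I ∪ (T \ L)).card = I.card + (T \ L).card :=
        Finset.card_union_of_disjoint hdisjIT
      have hc2 : (T ∩ L).card + (T \ L).card = T.card := Finset.card_inter_add_card_sdiff _ _
      have hc3 : (I ∪ (T \ L)).card ≤ T.card := hT.2 _ hVd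
      have hc4 : A.card ≤ I.card :=
        indep_card_le_of_subset_closed G hI.1 hAindep Finset.inter_subset_right
      have hAcard : A.card = I.card := by
        have hAc : A.card = (T ∩ L).card := by rw [hAdef]
        omega
      have hNAsub : nbhd G A ⊆ L \ A := fun w hw => Finset.mem_sdiff.2
        ⟨hNA hw, fun hwA => not_mem_nbhd_self G hAindep hwA hw⟩
      have hLcard : L.card = I.card + (nbhd G I).card := Finset.card_union_of_disjoint
        (Finset.disjoint_left.2 fun a ha hb => not_mem_nbhd_self G hI.1.1 ha hb)
      have hc5 : (L \ A).card + A.card = L.card :=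
        Finset.card_sdiff_add_card_eq_card Finset.inter_subset_right
      have hc6 : (nbhd G A).card ≤ (L \ A).card := Finset.card_le_card hNAsub
      have hAcrit : IsCritIndep G A := by
        refine ⟨hAindep, fun J hJ => ?_⟩
        have h1 : diffI G J ≤ diffI G I := hI.1.2 J hJ
        have h2 : diffI G I ≤ diffI G A := by unfold diffI; omega
        omega
      exact ⟨A, ⟨hAcrit, fun J hJ => (hI.2 J hJ).trans_eq hAcard.symm⟩,
        Finset.mem_inter.2 ⟨hvT, hvL'⟩⟩
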